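/- For |q|<1, ψ(-q) = E(q)E(q⁴)/E(q²), where ψ(q) = ∑_{n∈ℤ} q^{2n²-n} and E(q) = ∏_{n≥1}(1-q^n). -/

import Mathlib

open scoped BigOperators

noncomputable def E (q : ℂ) : ℂ := ∏' n : ℕ, (1 - q ^ (n + 1))

noncomputable def ramaf (a b : ℂ) : ℂ :=
  ∑' n : ℤ, a ^ (n * (n + 1) / 2) * b ^ (n * (n - 1) / 2)

noncomputable def phi (q : ℂ) : ℂ := ∑' n : ℤ, q ^ (n ^ 2)

noncomputable def psi (q : ℂ) : ℂ := ∑' n : ℤ, q ^ (2 * n ^ 2 - n)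

/-!
Put `s = q²` and `z = -q⁻¹` in the Jacobi triple product
`∑ₖ s^(k²) zᵏ = E(s²) ∏ⱼ (1 + z s^(2j+1)) (1 + z⁻¹ s^(2j+1))`. The left side becomes `ψ(-q)`
because `(q²)^(k²) (-q⁻¹)ᵏ = (-q)^(2k² - k)`, and the right side becomes
`E(q⁴) ∏ⱼ (1 - q^(4j+1)) (1 - q^(4j+3)) = E(q⁴) ∏ⱼ (1 - q^(2j+1)) = E(q⁴) E(q) / E(q²)`.

The triple product is the limit of its finite form
`∏_{j<N} (1 + z s^(2j+1)) (1 + z⁻¹ s^(2j+1)) = ∑ₖ s^(k²) [2N, N+k]_{s²} zᵏ`, which follows by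
induction on `N` from the `q`-Pascal rules. The central Gaussian binomials `[2N, N+k]_t` tend to
`1 / E(t)` and are bounded uniformly in `N` and `k`, so Tannery's theorem passes to the limit.
-/

open Filter Finset Topology

section QPochhammer

variable {t : ℂ}

lemma one_sub_pow_ne_zero (ht : ‖t‖ < 1) {k : ℕ} (hk : k ≠ 0) : 1 - t ^ k ≠ 0 := by
  refine sub_ne_zero.2 fun h => ?_
  have : ‖t ^ k‖ < 1 := by rw [norm_pow]; exact pow_lt_one₀ (norm_nonneg t) ht hk
  rw [← h, norm_one] at this
  exact lt_irrefl _ this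

lemma norm_sq_lt_one (ht : ‖t‖ < 1) : ‖t ^ 2‖ < 1 := by
  rw [norm_pow]
  exact pow_lt_one₀ (norm_nonneg t) ht two_ne_zero

lemma summable_norm_pow_comp (ht : ‖t‖ < 1) {g : ℕ → ℕ} (hg : Function.Injective g) :
    Summable fun k => ‖t ^ g k‖ := by
  simp only [norm_pow]
  exact (summable_geometric_of_lt_one (norm_nonneg t) ht).comp_injective hg

lemma multipliable_one_sub_pow_comp (ht : ‖t‖ < 1) {g : ℕ → ℕ} (hg : Function.Injective g) :
    Multipliable fun k => 1 - t ^ g k := by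
  simpa only [sub_eq_add_neg] using multipliable_one_add_of_summable
    (by simpa only [norm_neg] using summable_norm_pow_comp ht hg)

lemma E_ne_zero (ht : ‖t‖ < 1) : E t ≠ 0 := by
  simpa only [E, sub_eq_add_neg] using tprod_one_add_ne_zero_of_summable
    (fun n => by simpa only [sub_eq_add_neg] using one_sub_pow_ne_zero ht n.succ_ne_zero)
    (by simpa only [norm_neg] using summable_norm_pow_comp ht (add_left_injective 1))

lemma E_zero : E 0 = 1 := by simp [E]

noncomputable def qPochhammer (t : ℂ) (n : ℕ) : ℂ := ∏ i ∈ range n, (1 - t ^ (i + 1))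

lemma qPochhammer_succ (t : ℂ) (n : ℕ) :
    qPochhammer t (n + 1) = qPochhammer t n * (1 - t ^ (n + 1)) :=
  prod_range_succ _ _

lemma tendsto_qPochhammer (ht : ‖t‖ < 1) : Tendsto (qPochhammer t) atTop (𝓝 (E t)) :=
  (multipliable_one_sub_pow_comp ht (add_left_injective 1)).hasProd.tendsto_prod_nat

noncomputable def qPochhammerInv (t : ℂ) (m : ℤ) : ℂ :=
  if 0 ≤ m then (qPochhammer t m.toNat)⁻¹ else 0

lemma qPochhammerInv_of_neg {m : ℤ} (hm : m < 0) : qPochhammerInv t m = 0 :=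
  if_neg hm.not_ge

/-- At `m = 0` both sides vanish (`t ^ 0 = 1`), which is what makes the `q`-Pascal rules below
hold for every integer `m`. -/
lemma qPochhammerInv_sub_one (ht : ‖t‖ < 1) (m : ℤ) :
    qPochhammerInv t (m - 1) = (1 - t ^ m) * qPochhammerInv t m := by
  rcases lt_trichotomy m 0 with hm | rfl | hm
  · rw [qPochhammerInv_of_neg hm, qPochhammerInv_of_neg (by omega), mul_zero]
  · simp [qPochhammerInv_of_neg]
  · obtain ⟨n, rfl⟩ : ∃ n : ℕ, m = n + 1 := ⟨(m - 1).toNat, by omega⟩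
    have hn : 1 - t ^ (n + 1) ≠ 0 := one_sub_pow_ne_zero ht n.succ_ne_zero
    simp only [qPochhammerInv, add_sub_cancel_right, if_pos (by omega : (0 : ℤ) ≤ n),
      if_pos (by omega : (0 : ℤ) ≤ n + 1), Int.toNat_natCast,
      show ((n : ℤ) + 1).toNat = n + 1 by omega, qPochhammer_succ, mul_inv]
    rw [show t ^ ((n : ℤ) + 1) = t ^ (n + 1) by norm_cast, mul_left_comm, mul_inv_cancel₀ hn,
      mul_one]

lemma exists_norm_qPochhammerInv_le (ht : ‖t‖ < 1) : ∃ C, ∀ m, ‖qPochhammerInv t m‖ ≤ C := by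
  obtain ⟨C, hC⟩ := isBounded_iff_forall_norm_le.1
    (Metric.isBounded_range_of_tendsto _ ((tendsto_qPochhammer ht).inv₀ (E_ne_zero ht)))
  refine ⟨C, fun m => ?_⟩
  unfold qPochhammerInv
  split_ifs
  · exact hC _ ⟨_, rfl⟩
  · simpa using (norm_nonneg _).trans (hC _ ⟨0, rfl⟩)

lemma tendsto_qPochhammerInv_add (ht : ‖t‖ < 1) (c : ℤ) :
    Tendsto (fun N : ℕ => qPochhammerInv t (N + c)) atTop (𝓝 (E t)⁻¹) := by
  have hto : Tendsto (fun N : ℕ => ((N : ℤ) + c).toNat) atTop atTop :=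
    tendsto_atTop_atTop.2 fun b => ⟨b + c.natAbs, fun N hN => by omega⟩
  refine (((tendsto_qPochhammer ht).comp hto).inv₀ (E_ne_zero ht)).congr' ?_
  filter_upwards [eventually_ge_atTop c.natAbs] with N hN
  simp [qPochhammerInv, if_pos (by omega : 0 ≤ (N : ℤ) + c)]

end QPochhammer

section GaussBinom

variable {t : ℂ}

noncomputable def gaussBinom (t : ℂ) (n : ℕ) (m : ℤ) : ℂ :=
  qPochhammer t n * qPochhammerInv t m * qPochhammerInv t (n - m)

lemma gaussBinom_of_neg (n : ℕ) {m : ℤ} (hm : m < 0) : gaussBinom t n m = 0 := by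
  rw [gaussBinom, qPochhammerInv_of_neg hm, mul_zero, zero_mul]

lemma gaussBinom_of_lt {n : ℕ} {m : ℤ} (hm : n < m) : gaussBinom t n m = 0 := by
  rw [gaussBinom, qPochhammerInv_of_neg (m := n - m) (by omega), mul_zero]

lemma gaussBinom_zero_left (m : ℤ) : gaussBinom t 0 m = if m = 0 then 1 else 0 := by
  split_ifs with hm
  · simp [hm, gaussBinom, qPochhammer, qPochhammerInv]
  · rcases lt_or_gt_of_ne hm with hm | hm
    · exact gaussBinom_of_neg 0 hm
    · exact gaussBinom_of_lt hm

lemma gaussBinom_succ (ht : ‖t‖ < 1) (ht0 : t ≠ 0) (n : ℕ) (m : ℤ) :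
    gaussBinom t (n + 1) m =
      gaussBinom t n m + t ^ ((n : ℤ) + 1 - m) * gaussBinom t n (m - 1) := by
  have hm := qPochhammerInv_sub_one ht m
  have hnm := qPochhammerInv_sub_one ht ((n : ℤ) + 1 - m)
  have hpow : t ^ ((n : ℤ) + 1 - m) * t ^ m = t ^ (n + 1) := by
    rw [← zpow_add₀ ht0, sub_add_cancel]; norm_cast
  simp only [gaussBinom, qPochhammer_succ, Nat.cast_succ]
  rw [show (n : ℤ) - m = n + 1 - m - 1 by ring, show (n : ℤ) - (m - 1) = n + 1 - m by ring, hm,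
    hnm]
  linear_combination qPochhammer t n * qPochhammerInv t m * qPochhammerInv t (n + 1 - m) * hpow

lemma gaussBinom_succ' (ht : ‖t‖ < 1) (ht0 : t ≠ 0) (n : ℕ) (m : ℤ) :
    gaussBinom t (n + 1) m = t ^ m * gaussBinom t n m + gaussBinom t n (m - 1) := by
  have hm := qPochhammerInv_sub_one ht m
  have hnm := qPochhammerInv_sub_one ht ((n : ℤ) + 1 - m)
  have hpow : t ^ m * t ^ ((n : ℤ) + 1 - m) = t ^ (n + 1) := by
    rw [← zpow_add₀ ht0, add_sub_cancel]; norm_cast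
  simp only [gaussBinom, qPochhammer_succ, Nat.cast_succ]
  rw [show (n : ℤ) - m = n + 1 - m - 1 by ring, show (n : ℤ) - (m - 1) = n + 1 - m by ring, hm,
    hnm]
  linear_combination qPochhammer t n * qPochhammerInv t m * qPochhammerInv t (n + 1 - m) * hpow

lemma gaussBinom_add_two (ht : ‖t‖ < 1) (ht0 : t ≠ 0) (n : ℕ) (m : ℤ) :
    gaussBinom t (n + 2) m = t ^ m * gaussBinom t n m
      + (1 + t ^ ((n : ℤ) + 1)) * gaussBinom t n (m - 1)
      + t ^ ((n : ℤ) + 2 - m) * gaussBinom t n (m - 2) := by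
  have hpow : t ^ ((n : ℤ) + 2 - m) * t ^ (m - 1) = t ^ ((n : ℤ) + 1) := by
    rw [← zpow_add₀ ht0]; ring_nf
  rw [gaussBinom_succ ht ht0, gaussBinom_succ' ht ht0, gaussBinom_succ' ht ht0,
    show m - 1 - 1 = m - 2 by ring]
  push_cast
  rw [show (n : ℤ) + 1 + 1 - m = n + 2 - m by ring]
  linear_combination gaussBinom t n (m - 1) * hpow

lemma exists_norm_gaussBinom_le (ht : ‖t‖ < 1) : ∃ C, ∀ n m, ‖gaussBinom t n m‖ ≤ C := by
  obtain ⟨A, hA⟩ := isBounded_iff_forall_norm_le.1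
    (Metric.isBounded_range_of_tendsto _ (tendsto_qPochhammer ht))
  obtain ⟨B, hB⟩ := exists_norm_qPochhammerInv_le ht
  refine ⟨A * B * B, fun n m => ?_⟩
  rw [gaussBinom, norm_mul, norm_mul]
  have hA0 : 0 ≤ A := (norm_nonneg _).trans (hA _ ⟨0, rfl⟩)
  have hB0 : 0 ≤ B := (norm_nonneg _).trans (hB 0)
  exact mul_le_mul (mul_le_mul (hA _ ⟨n, rfl⟩) (hB m) (norm_nonneg _) hA0) (hB _) (norm_nonneg _)
    (mul_nonneg hA0 hB0)

lemma tendsto_gaussBinom_central (ht : ‖t‖ < 1) (k : ℤ) :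
    Tendsto (fun N : ℕ => gaussBinom t (2 * N) (N + k)) atTop (𝓝 (E t)⁻¹) := by
  have hP : Tendsto (fun N : ℕ => qPochhammer t (2 * N)) atTop (𝓝 (E t)) :=
    (tendsto_qPochhammer ht).comp (tendsto_id.const_mul_atTop' two_pos)
  have hlim := (hP.mul (tendsto_qPochhammerInv_add ht k)).mul (tendsto_qPochhammerInv_add ht (-k))
  rw [mul_inv_cancel₀ (E_ne_zero ht), one_mul] at hlim
  refine hlim.congr fun N => ?_
  rw [gaussBinom, show ((2 * N : ℕ) : ℤ) - (N + k) = N + -k by push_cast; ring]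

end GaussBinom

section JacobiTripleProduct

variable {s z : ℂ}

lemma sq_zpow (s : ℂ) (a : ℤ) : (s ^ 2) ^ a = s ^ (2 * a) := by
  rw [← zpow_natCast s 2, ← zpow_mul]
  norm_num

lemma jacobiCoeff_succ (hs : ‖s‖ < 1) (hs0 : s ≠ 0) (N : ℕ) (k : ℤ) :
    s ^ (k ^ 2) * gaussBinom (s ^ 2) (2 * (N + 1)) (↑(N + 1) + k)
      = (1 + s ^ (4 * N + 2)) * (s ^ (k ^ 2) * gaussBinom (s ^ 2) (2 * N) (N + k))
        + s ^ (2 * N + 1) * (s ^ ((k - 1) ^ 2) * gaussBinom (s ^ 2) (2 * N) (N + (k - 1))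
          + s ^ ((k + 1) ^ 2) * gaussBinom (s ^ 2) (2 * N) (N + (k + 1))) := by
  rw [show 2 * (N + 1) = 2 * N + 2 by ring,
    gaussBinom_add_two (norm_sq_lt_one hs) (pow_ne_zero 2 hs0)]
  push_cast
  rw [show (N : ℤ) + 1 + k - 1 = N + k by ring, show (N : ℤ) + 1 + k - 2 = N + (k - 1) by ring,
    show (N : ℤ) + 1 + k = N + (k + 1) by ring]
  have e1 : s ^ (k ^ 2) * s ^ (2 * (N + (k + 1))) = s ^ (2 * N + 1) * s ^ ((k + 1) ^ 2) := by
    rw [← zpow_natCast, ← zpow_add₀ hs0, ← zpow_add₀ hs0]; push_cast; ring_nf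
  have e2 : s ^ (2 * (2 * N + 1 : ℤ)) = s ^ (4 * N + 2) := by
    rw [← zpow_natCast]; push_cast; ring_nf
  have e3 : s ^ (k ^ 2) * s ^ (2 * (2 * N + 2 - (N + (k + 1))))
      = s ^ (2 * N + 1) * s ^ ((k - 1) ^ 2) := by
    rw [← zpow_natCast, ← zpow_add₀ hs0, ← zpow_add₀ hs0]; push_cast; ring_nf
  simp only [sq_zpow]
  linear_combination gaussBinom (s ^ 2) (2 * N) (N + (k + 1)) * e1
    + s ^ (k ^ 2) * gaussBinom (s ^ 2) (2 * N) (N + k) * e2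
    + gaussBinom (s ^ 2) (2 * N) (N + (k - 1)) * e3

theorem hasSum_jacobi_finite (hs : ‖s‖ < 1) (hs0 : s ≠ 0) (hz : z ≠ 0) (N : ℕ) :
    HasSum (fun k : ℤ => s ^ (k ^ 2) * gaussBinom (s ^ 2) (2 * N) (N + k) * z ^ k)
      (∏ j ∈ range N, (1 + z * s ^ (2 * j + 1)) * (1 + z⁻¹ * s ^ (2 * j + 1))) := by
  induction N with
  | zero =>
    convert hasSum_single (0 : ℤ) fun k hk => ?_ using 1
    · simp [gaussBinom_zero_left]
    · simp [gaussBinom_zero_left, hk]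
  | succ N ih =>
    have ihPred := (Equiv.subRight (1 : ℤ)).hasSum_iff.2 ih
    have ihSucc := (Equiv.addRight (1 : ℤ)).hasSum_iff.2 ih
    rw [prod_range_succ]
    set P := ∏ j ∈ range N, (1 + z * s ^ (2 * j + 1)) * (1 + z⁻¹ * s ^ (2 * j + 1))
    have hP : P * ((1 + z * s ^ (2 * N + 1)) * (1 + z⁻¹ * s ^ (2 * N + 1)))
        = (1 + s ^ (4 * N + 2)) * P + s ^ (2 * N + 1) * z * P + s ^ (2 * N + 1) * z⁻¹ * P := by
      field_simp
      ring
    rw [hP]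
    refine (((ih.mul_left _).add (ihPred.mul_left _)).add (ihSucc.mul_left _)).congr_fun
      fun k => ?_
    simp only [Function.comp_apply, Equiv.subRight_apply, Equiv.coe_addRight]
    rw [jacobiCoeff_succ hs hs0, zpow_sub_one₀ hz, zpow_add_one₀ hz]
    field_simp
    ring

open Complex Real in
lemma summable_norm_zpow_sq_mul_zpow (hs : ‖s‖ < 1) (hs0 : s ≠ 0) (hz : z ≠ 0) :
    Summable fun k : ℤ => ‖s ^ (k ^ 2) * z ^ k‖ := by
  set τ := Complex.log s / (π * I)
  set w := Complex.log z / (2 * π * I)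
  have hτ : 0 < τ.im := by
    have hlog : (Complex.log s).re < 0 := by
      rw [Complex.log_re]; exact Real.log_neg (norm_pos_iff.2 hs0) hs
    simp only [div_im, mul_re, ofReal_re, I_re, mul_zero, ofReal_im, I_im, mul_one, sub_self,
      map_mul, normSq_ofReal, normSq_I, zero_div, mul_im, add_zero, zero_sub, Left.neg_pos_iff, τ]
    exact div_neg_of_neg_of_pos (mul_neg_of_neg_of_pos hlog pi_pos) (by positivity)
  have hterm (k : ℤ) : jacobiTheta₂_term k w τ = s ^ (k ^ 2) * z ^ k := by
    have hpi : (π : ℂ) * I ≠ 0 := mul_ne_zero (ofReal_ne_zero.2 pi_ne_zero) I_ne_zero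
    rw [jacobiTheta₂_term, show 2 * π * I * k * w + π * I * k ^ 2 * τ
      = ((k ^ 2 : ℤ) : ℂ) * Complex.log s + k * Complex.log z by
        simp only [τ, w]; push_cast; field_simp; ring,
      Complex.exp_add, Complex.exp_int_mul, Complex.exp_int_mul, Complex.exp_log hs0,
      Complex.exp_log hz]
  exact (summable_norm_iff.2 ((summable_jacobiTheta₂_term_iff w τ).2 hτ)).congr
    fun k => by rw [hterm]

lemma multipliable_one_add_mul_pow_odd (hs : ‖s‖ < 1) (u : ℂ) :
    Multipliable fun j : ℕ => 1 + u * s ^ (2 * j + 1) :=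
  multipliable_one_add_of_summable <| by
    simpa only [norm_mul] using (summable_norm_pow_comp hs
      (fun a b h => by simpa using h : Function.Injective fun j => 2 * j + 1)).mul_left ‖u‖

theorem jacobi_triple_product (hs : ‖s‖ < 1) (hs0 : s ≠ 0) (hz : z ≠ 0) :
    ∑' k : ℤ, s ^ (k ^ 2) * z ^ k =
      E (s ^ 2) * ((∏' j : ℕ, (1 + z * s ^ (2 * j + 1))) *
        ∏' j : ℕ, (1 + z⁻¹ * s ^ (2 * j + 1))) := by
  have ht := norm_sq_lt_one hs
  have hprod := ((multipliable_one_add_mul_pow_odd hs z).hasProd.mul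
    (multipliable_one_add_mul_pow_odd hs z⁻¹).hasProd).tendsto_prod_nat
  obtain ⟨C, hC⟩ := exists_norm_gaussBinom_le ht
  have hsum := tendsto_tsum_of_dominated_convergence
    ((summable_norm_zpow_sq_mul_zpow hs hs0 hz).mul_left C)
    (fun k => ((tendsto_gaussBinom_central ht k).const_mul (s ^ (k ^ 2))).mul_const (z ^ k))
    (Eventually.of_forall fun N k => by
      rw [norm_mul, norm_mul, norm_mul, mul_right_comm, mul_comm C]
      exact mul_le_mul_of_nonneg_left (hC _ _) (by positivity))
  have hlim := tendsto_nhds_unique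
    (hprod.congr fun N => (hasSum_jacobi_finite hs hs0 hz N).tsum_eq.symm) hsum
  rw [hlim]
  simp_rw [mul_right_comm _ (E (s ^ 2))⁻¹, tsum_mul_right]
  field_simp [E_ne_zero ht]

end JacobiTripleProduct

section EtaQuotient

variable {q : ℂ}

lemma E_eq_tprod_odd_mul_E_sq (hq : ‖q‖ < 1) :
    E q = (∏' k : ℕ, (1 - q ^ (2 * k + 1))) * E (q ^ 2) := by
  rw [E, ← tprod_even_mul_odd (f := fun n => 1 - q ^ (n + 1))
    (multipliable_one_sub_pow_comp hq (g := fun k => 2 * k + 1) fun a b h => by simpa using h)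
    (multipliable_one_sub_pow_comp hq (g := fun k => 2 * k + 1 + 1) fun a b h => by simpa using h),
    E]
  congr 1
  exact tprod_congr fun k => by ring

lemma tprod_one_sub_pow_odd (hq : ‖q‖ < 1) :
    ∏' k : ℕ, (1 - q ^ (2 * k + 1)) =
      (∏' k : ℕ, (1 - q ^ (4 * k + 1))) * ∏' k : ℕ, (1 - q ^ (4 * k + 3)) := by
  rw [← tprod_even_mul_odd (f := fun k => 1 - q ^ (2 * k + 1))
    (multipliable_one_sub_pow_comp hq (g := fun k => 2 * (2 * k) + 1)
      fun a b h => by simpa using h)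
    (multipliable_one_sub_pow_comp hq (g := fun k => 2 * (2 * k + 1) + 1)
      fun a b h => by simpa using h)]
  congr 1 <;> exact tprod_congr fun k => by ring

lemma neg_zpow_two_mul_sq_sub (hq : q ≠ 0) (n : ℤ) :
    (-q) ^ (2 * n ^ 2 - n) = (q ^ 2) ^ (n ^ 2) * (-q⁻¹) ^ n := by
  rw [sub_eq_add_neg, zpow_add₀ (neg_ne_zero.2 hq), zpow_mul, zpow_neg, ← inv_zpow, inv_neg]
  norm_num

lemma psi_zero : psi 0 = 1 := by
  have hexp (n : ℤ) (hn : n ≠ 0) : 2 * n ^ 2 - n ≠ 0 := by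
    rcases lt_or_gt_of_ne hn with h | h <;> nlinarith
  rw [psi, tsum_eq_single 0 fun n hn => zero_zpow _ (hexp n hn)]
  simp

end EtaQuotient

theorem psi_neg_eta_quotient (q : ℂ) (hq : ‖q‖ < 1) :
    psi (-q) = E q * E (q ^ 4) / E (q ^ 2) := by
  rcases eq_or_ne q 0 with rfl | hq0
  · simp [psi_zero, E_zero]
  have hq2 := norm_sq_lt_one hq
  have hjtp := jacobi_triple_product (z := -q⁻¹) hq2 (pow_ne_zero 2 hq0) (by simpa using hq0)
  rw [psi, tsum_congr (neg_zpow_two_mul_sq_sub hq0), hjtp, E_eq_tprod_odd_mul_E_sq hq,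
    tprod_one_sub_pow_odd hq, ← pow_mul,
    tprod_congr fun j => show 1 + -q⁻¹ * (q ^ 2) ^ (2 * j + 1) = 1 - q ^ (4 * j + 1) by
      field_simp; ring,
    tprod_congr fun j => show 1 + (-q⁻¹)⁻¹ * (q ^ 2) ^ (2 * j + 1) = 1 - q ^ (4 * j + 3) by
      field_simp; ring]
  field_simp [E_ne_zero hq2]
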